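/- arXiv:2310.00921 — 2 statements merged into one kernel-verified Lean document; each statement's English description precedes it below -/
import Mathlib

section
/- There is a group isomorphism Aut_K(K ⋊[φ] Q) ≅ Z¹(Q,K,φ) ⋊ C(Q,K,φ), the semidirect product formed with respect to the action ((σ,κ) • d)(q) = σ(d(κ⁻¹(q))) of C(Q,K,φ) on Z¹(Q,K,φ). -/
/-- The abelian group `Z¹(Q,K,φ)` of 1-cocycles (derivations) `d : Q → K`,
`d(p*q) = d(p) * φ(p)(d(q))`, as a subgroup of `Q → K` under pointwise
multiplication. -/
def wellsZ1 {K Q : Type*} [CommGroup K] [Group Q] (φ : Q →* MulAut K) :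
    Subgroup (Q → K) where
  carrier := {d | ∀ p q : Q, d (p * q) = d p * φ p (d q)}
  one_mem' := by intro p q; simp
  mul_mem' := by
    intro d e hd he p q
    simp only [Pi.mul_apply, hd p q, he p q, map_mul]
    exact mul_mul_mul_comm _ _ _ _
  inv_mem' := by
    intro d hd p q
    simp only [Pi.inv_apply, hd p q, mul_inv_rev, map_inv]
    exact mul_comm _ _

/-- The subgroup `C(Q,K,φ) ≤ Aut K × Aut Q` of compatible pairs:
`σ(φ(q)(k)) = φ(κ(q))(σ(k))`. -/
def wellsC {K Q : Type*} [CommGroup K] [Group Q] (φ : Q →* MulAut K) :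
    Subgroup (MulAut K × MulAut Q) where
  carrier := {c | ∀ (q : Q) (k : K), c.1 (φ q k) = φ (c.2 q) (c.1 k)}
  one_mem' := by intro q k; rfl
  mul_mem' := by
    intro a b ha hb q k
    simp only [Prod.fst_mul, Prod.snd_mul, MulAut.mul_apply]
    rw [hb q k, ha]
  inv_mem' := by
    intro a ha q k
    simp only [Prod.fst_inv, Prod.snd_inv]
    have h := ha (a.2⁻¹ q) (a.1⁻¹ k)
    simp only [MulAut.apply_inv_self] at h
    rw [← h]
    simp [MulAut.inv_apply_self]

/-- Twisting a 1-cocycle by a compatible pair gives a 1-cocycle. -/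
theorem wellsZ1_twist_mem {K Q : Type*} [CommGroup K] [Group Q] (φ : Q →* MulAut K)
    (σ : MulAut K) (κ : MulAut Q)
    (hc : ∀ (q : Q) (k : K), σ (φ q k) = φ (κ q) (σ k))
    (d : Q → K) (hd : d ∈ wellsZ1 φ) :
    (fun q => σ (d (κ⁻¹ q))) ∈ wellsZ1 φ := by
  intro p q
  show σ (d (κ⁻¹ (p * q))) = σ (d (κ⁻¹ p)) * φ p (σ (d (κ⁻¹ q)))
  rw [show (κ⁻¹ : MulAut Q) (p * q) = κ⁻¹ p * κ⁻¹ q from map_mul _ _ _,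
    hd _ _, map_mul, hc]
  rw [MulAut.apply_inv_self]

/-- The inverse of a compatible pair is compatible. -/
theorem wellsC_inv_compat {K Q : Type*} [CommGroup K] [Group Q] (φ : Q →* MulAut K)
    (σ : MulAut K) (κ : MulAut Q)
    (hc : ∀ (q : Q) (k : K), σ (φ q k) = φ (κ q) (σ k)) :
    ∀ (q : Q) (k : K), σ⁻¹ (φ q k) = φ (κ⁻¹ q) (σ⁻¹ k) := by
  intro q k
  have h := hc (κ⁻¹ q) (σ⁻¹ k)
  simp only [MulAut.apply_inv_self] at h
  rw [← h]
  simp [MulAut.inv_apply_self]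

/-- The subgroup `Aut_K (K ⋊[φ] Q)` of automorphisms of the semidirect product
mapping the canonical copy `K × {1}` (the range of `inl`) onto itself. -/
def wellsAutK {K Q : Type*} [CommGroup K] [Group Q] (φ : Q →* MulAut K) :
    Subgroup (MulAut (K ⋊[φ] Q)) where
  carrier := {e | ∀ x : K ⋊[φ] Q,
    x ∈ (SemidirectProduct.inl : K →* K ⋊[φ] Q).range ↔
      e x ∈ (SemidirectProduct.inl : K →* K ⋊[φ] Q).range}
  one_mem' := by intro x; rfl
  mul_mem' := by
    intro a b ha hb x
    simpa only [MulAut.mul_apply] using (hb x).trans (ha (b x))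
  inv_mem' := by
    intro a ha x
    have h := ha (a⁻¹ x)
    simpa only [MulAut.apply_inv_self] using h.symm

/-- The action of `C(Q,K,φ)` on `Z¹(Q,K,φ)` by `((σ,κ) • d)(q) = σ(d(κ⁻¹(q)))`. -/
def wellsCAction {K Q : Type*} [CommGroup K] [Group Q] (φ : Q →* MulAut K) :
    wellsC φ →* MulAut (wellsZ1 φ) where
  toFun c :=
    { toFun := fun d => ⟨fun q => (c : MulAut K × MulAut Q).1
        (d.1 ((c : MulAut K × MulAut Q).2⁻¹ q)),
        wellsZ1_twist_mem φ _ _ c.2 d.1 d.2⟩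
      invFun := fun d => ⟨fun q => (c : MulAut K × MulAut Q).1⁻¹
        (d.1 ((c : MulAut K × MulAut Q).2 q)), by
          have h := wellsZ1_twist_mem φ ((c : MulAut K × MulAut Q).1⁻¹)
            ((c : MulAut K × MulAut Q).2⁻¹)
            (wellsC_inv_compat φ _ _ c.2) d.1 d.2
          simpa only [inv_inv] using h⟩
      left_inv := by
        intro d
        apply Subtype.ext
        funext q
        simp
      right_inv := by
        intro d
        apply Subtype.ext
        funext q
        simp
      map_mul' := by
        intro d e
        apply Subtype.ext
        funext q
        simp }
  map_one' := by
    apply MulEquiv.ext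
    intro d
    apply Subtype.ext
    funext q
    rfl
  map_mul' := by
    intro a b
    apply MulEquiv.ext
    intro d
    apply Subtype.ext
    funext q
    simp [MulAut.mul_apply, mul_inv_rev]

/-!
The automorphisms `δ d : (k, q) ↦ (k * d q, q)` for a cocycle `d` and `γ (σ, κ) : (k, q) ↦ (σ k, κ q)`
for a compatible pair preserve `K`, and `γ c * δ d * (γ c)⁻¹ = δ (c • d)`, so they combine into a
homomorphism `Z¹ ⋊ C → Aut_K(K ⋊ Q)`, `(d, (σ, κ)) ↦ ((k, q) ↦ (σ k * d (κ q), κ q))`. It is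
bijective: an `e ∈ Aut_K` restricts to `σ ∈ Aut K`, induces `κ ∈ Aut Q` on the quotient by `K`, and
`d q` is the `K`-component of `e (κ⁻¹ q)`; compatibility of `(σ, κ)` is `e` applied to
`inl (φ q k) = inr q * inl k * (inr q)⁻¹`, which needs `K` abelian.
-/

namespace SemidirectProduct

variable {N G : Type*} [Group N] [Group G] {φ : G →* MulAut N}

theorem mem_range_inl_iff {x : N ⋊[φ] G} :
    x ∈ (inl : N →* N ⋊[φ] G).range ↔ x.right = 1 := by
  rw [range_inl_eq_ker_rightHom, MonoidHom.mem_ker, rightHom_eq_right]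

theorem inl_left_of_right_eq_one {x : N ⋊[φ] G} (hx : x.right = 1) : inl x.left = x := by
  ext <;> simp [hx]

theorem mul_inl_mul_inv {N : Type*} [CommGroup N] {φ : G →* MulAut N} (y : N ⋊[φ] G) (n : N) :
    y * inl n * y⁻¹ = inl (φ y.right n) := by
  ext
  · simp [mul_comm y.left]
  · simp

end SemidirectProduct

open SemidirectProduct

section

variable {K Q : Type*} [CommGroup K] [Group Q] {φ : Q →* MulAut K}

theorem mem_wellsAutK_iff {e : MulAut (K ⋊[φ] Q)} :
    e ∈ wellsAutK φ ↔ ∀ x, x.right = 1 ↔ (e x).right = 1 := by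
  simp only [wellsAutK, Subgroup.mem_mk, Submonoid.mem_mk, Subsemigroup.mem_mk, Set.mem_ofPred_eq,
    mem_range_inl_iff]

theorem mem_wellsAutK_of_right_apply {e : MulAut (K ⋊[φ] Q)} (κ : MulAut Q)
    (he : ∀ x, (e x).right = κ x.right) : e ∈ wellsAutK φ :=
  mem_wellsAutK_iff.mpr fun x => by rw [he, map_eq_one_iff κ κ.injective]

def wellsZ1Aut (d : wellsZ1 φ) : MulAut (K ⋊[φ] Q) where
  toFun x := ⟨x.left * d.1 x.right, x.right⟩
  invFun x := ⟨x.left * (d.1 x.right)⁻¹, x.right⟩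
  left_inv x := by simp
  right_inv x := by simp
  map_mul' x y := by
    ext
    · simp only [mul_left, mul_right, d.2 x.right y.right, map_mul]
      exact mul_mul_mul_comm _ _ _ _
    · rfl

variable (φ) in
def wellsZ1Hom : wellsZ1 φ →* wellsAutK φ where
  toFun d := ⟨wellsZ1Aut d, mem_wellsAutK_of_right_apply 1 fun _ => rfl⟩
  map_one' := by ext x <;> simp [wellsZ1Aut]
  map_mul' d d' := by ext x <;> simp [wellsZ1Aut, mul_assoc, mul_comm (d'.1 _)]

def wellsCAut (c : wellsC φ) : MulAut (K ⋊[φ] Q) :=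
  congr c.1.1 c.1.2 fun q => MulEquiv.ext (c.2 q)

variable (φ) in
def wellsCHom : wellsC φ →* wellsAutK φ where
  toFun c := ⟨wellsCAut c, mem_wellsAutK_of_right_apply c.1.2 fun _ => rfl⟩
  map_one' := by ext x <;> rfl
  map_mul' c c' := by ext x <;> rfl

theorem wellsZ1Hom_smul_mul_wellsCHom (c : wellsC φ) (d : wellsZ1 φ) :
    wellsZ1Hom φ (wellsCAction φ c d) * wellsCHom φ c = wellsCHom φ c * wellsZ1Hom φ d := by
  ext x
  · simp [wellsZ1Hom, wellsCHom, wellsZ1Aut, wellsCAut, wellsCAction]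
  · rfl

variable (φ) in
def wellsHom : wellsZ1 φ ⋊[wellsCAction φ] wellsC φ →* wellsAutK φ :=
  lift (wellsZ1Hom φ) (wellsCHom φ) fun c => MonoidHom.ext fun d => by
    simp only [MonoidHom.comp_apply, MulEquiv.coe_toMonoidHom, MulAut.conj_apply]
    exact eq_mul_inv_of_mul_eq (wellsZ1Hom_smul_mul_wellsCHom c d)

theorem wellsHom_apply (a : wellsZ1 φ ⋊[wellsCAction φ] wellsC φ) (x : K ⋊[φ] Q) :
    (wellsHom φ a : MulAut (K ⋊[φ] Q)) x =
      ⟨a.right.1.1 x.left * a.left.1 (a.right.1.2 x.right), a.right.1.2 x.right⟩ :=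
  rfl

theorem wellsHom_injective : Function.Injective (wellsHom φ) := by
  refine (injective_iff_map_eq_one _).mpr fun a ha => ?_
  have fix (x : K ⋊[φ] Q) : (wellsHom φ a : MulAut (K ⋊[φ] Q)) x = x := by rw [ha]; rfl
  have hκ (q : Q) : a.right.1.2 q = q := congrArg right (fix (inr q))
  have hd (q : Q) : a.left.1 q = 1 := by
    simpa [wellsHom_apply, hκ] using congrArg left (fix (inr q))
  have hσ (k : K) : a.right.1.1 k = k := by
    simpa [wellsHom_apply, hd] using congrArg left (fix (inl k))
  ext <;> simp [hd, hσ, hκ]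

namespace wellsAutK

variable (e : wellsAutK φ)

theorem right_apply_inl (k : K) : ((e : MulAut (K ⋊[φ] Q)) (inl k)).right = 1 :=
  (mem_wellsAutK_iff.mp e.2 (inl k)).mp rfl

theorem inl_left_apply_inl (k : K) :
    inl ((e : MulAut (K ⋊[φ] Q)) (inl k)).left = (e : MulAut (K ⋊[φ] Q)) (inl k) :=
  inl_left_of_right_eq_one (right_apply_inl e k)

theorem right_apply (x : K ⋊[φ] Q) :
    ((e : MulAut (K ⋊[φ] Q)) x).right = ((e : MulAut (K ⋊[φ] Q)) (inr x.right)).right := by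
  conv_lhs => rw [← inl_left_mul_inr_right x, map_mul, mul_right, right_apply_inl, one_mul]

def restrict : MulAut K where
  toFun k := ((e : MulAut (K ⋊[φ] Q)) (inl k)).left
  invFun k := ((e⁻¹ : wellsAutK φ) : MulAut (K ⋊[φ] Q)) (inl k) |>.left
  left_inv k := by
    dsimp only
    rw [inl_left_apply_inl, Subgroup.coe_inv, MulAut.inv_apply_self, left_inl]
  right_inv k := by
    dsimp only
    rw [inl_left_apply_inl e⁻¹, Subgroup.coe_inv, MulAut.apply_inv_self, left_inl]
  map_mul' k k' := inl_injective <| by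
    rw [inl_left_apply_inl]
    simp only [map_mul, inl_left_apply_inl]

theorem inl_restrict (k : K) : inl (restrict e k) = (e : MulAut (K ⋊[φ] Q)) (inl k) :=
  inl_left_apply_inl e k

def induced : MulAut Q where
  toFun q := ((e : MulAut (K ⋊[φ] Q)) (inr q)).right
  invFun q := ((e⁻¹ : wellsAutK φ) : MulAut (K ⋊[φ] Q)) (inr q) |>.right
  left_inv q := by
    dsimp only
    rw [← right_apply e⁻¹, Subgroup.coe_inv, MulAut.inv_apply_self, right_inr]
  right_inv q := by
    dsimp only
    rw [← right_apply e, Subgroup.coe_inv, MulAut.apply_inv_self, right_inr]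
  map_mul' q q' := by simp only [map_mul, mul_right]

theorem induced_apply (q : Q) : induced e q = ((e : MulAut (K ⋊[φ] Q)) (inr q)).right :=
  rfl

theorem restrict_induced_mem_wellsC : (restrict e, induced e) ∈ wellsC φ :=
  fun q k => inl_injective <| by
    dsimp only
    rw [inl_restrict, inl_aut, map_inv inr, map_mul, map_mul, map_inv,
      ← inl_restrict, mul_inl_mul_inv, induced_apply]

def cocycle : wellsZ1 φ where
  val q := ((e : MulAut (K ⋊[φ] Q)) (inr ((induced e)⁻¹ q))).left
  property p q := by
    simp only [map_mul, mul_left, ← induced_apply, MulAut.apply_inv_self]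

end wellsAutK

theorem wellsHom_surjective : Function.Surjective (wellsHom φ) := fun e => by
  refine ⟨⟨wellsAutK.cocycle e, ⟨_, wellsAutK.restrict_induced_mem_wellsC e⟩⟩,
    Subtype.ext <| MulEquiv.ext fun x => ?_⟩
  conv_rhs => rw [← inl_left_mul_inr_right x, map_mul, ← wellsAutK.inl_restrict]
  ext
  · simp [wellsHom_apply, wellsAutK.cocycle]
  · simp [wellsHom_apply, wellsAutK.induced_apply]

end

/-- There is a group isomorphism
`Aut_K(K ⋊[φ] Q) ≅ Z¹(Q,K,φ) ⋊ C(Q,K,φ)`, the semidirect product formed with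
respect to the action `((σ,κ) • d)(q) = σ(d(κ⁻¹(q)))`. -/
theorem wells_autK_semidirect_iso {K Q : Type*} [CommGroup K] [Group Q]
    (φ : Q →* MulAut K) :
    Nonempty (wellsAutK φ ≃* wellsZ1 φ ⋊[wellsCAction φ] wellsC φ) :=
  ⟨(MulEquiv.ofBijective (wellsHom φ) ⟨wellsHom_injective, wellsHom_surjective⟩).symm⟩
end

section
/- Let σ be an R-linear automorphism of I and κ an R-linear automorphism of N. There exists φ ∈ Aut_I M with φ|_I = σ and π ∘ φ = κ ∘ π if and only if there exists a function h : N → I such that for all x, y ∈ N and all r ∈ R: T_+(κ(x),κ(y)) - σ(T_+(x,y)) = h(κ(x)) + h(κ(y)) - h(κ(x)+κ(y)) and T_r(κ(x)) - σ(T_r(x)) = r • h(κ(x)) - h(r • κ(x)). (This is the exactness of the Wells sequence at Aut I × Aut N for extensions of R-modules.) -/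
/-!
Split `m = l (π m) + (m - l (π m))` with the second summand in `I`. For `g : N → M`, the map
`m ↦ g (π m) + σ (m - l (π m))` is `R`-linear exactly when the failure of `g` to be additive and
homogeneous is `σ` applied to `T_+` and `T_r`. For `g = (l - h) ∘ κ` this is the stated condition
on `h`; the map then restricts to `σ` on `I` and covers `κ`, so it is an automorphism by the five
lemma. Conversely, an automorphism `φ` makes `φ ∘ l ∘ κ⁻¹` a second lift of `π`, and
`h = l - φ ∘ l ∘ κ⁻¹` has as coboundary the difference of the cocycles of the two lifts.
-/

/-- The additive 2-cocycle `T_+(x,y) = l(x) + l(y) - l(x+y)` of a set-theoretic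
lifting `l` of a surjective linear map `π`; its values lie in `I = ker π`. -/
def wellsTadd {R M N : Type*} [Ring R] [AddCommGroup M] [Module R M]
    [AddCommGroup N] [Module R N] (π : M →ₗ[R] N) (l : N → M)
    (hl : ∀ x, π (l x) = x) (x y : N) : LinearMap.ker π :=
  ⟨l x + l y - l (x + y), by simp [LinearMap.mem_ker, map_add, map_sub, hl]⟩

/-- The scalar 2-cocycle `T_r(x) = r • l(x) - l(r • x)` of a set-theoretic lifting
`l` of a surjective linear map `π`; its values lie in `I = ker π`. -/
def wellsTsmul {R M N : Type*} [Ring R] [AddCommGroup M] [Module R M]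
    [AddCommGroup N] [Module R N] (π : M →ₗ[R] N) (l : N → M)
    (hl : ∀ x, π (l x) = x) (r : R) (x : N) : LinearMap.ker π :=
  ⟨r • l x - l (r • x), by simp [LinearMap.mem_ker, map_sub, map_smul, hl]⟩

open LinearMap (ker)

section Extension

variable {R M N M' N' : Type*} [Ring R] [AddCommGroup M] [Module R M] [AddCommGroup N]
  [Module R N] [AddCommGroup M'] [Module R M'] [AddCommGroup N'] [Module R N']

lemma mem_ker_iff_map_mem_ker {π : M →ₗ[R] N} {π' : M' →ₗ[R] N'} {φ : M →ₗ[R] M'}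
    {κ : N →ₗ[R] N'} (hκ : Function.Injective κ) (hφ : ∀ x, π' (φ x) = κ (π x)) (x : M) :
    x ∈ ker π ↔ φ x ∈ ker π' := by
  simp only [LinearMap.mem_ker, hφ, map_eq_zero_iff κ hκ]

lemma bijective_of_restrict_ker_of_comp {π : M →ₗ[R] N} {π' : M' →ₗ[R] N'}
    (hπ : Function.Surjective π) {φ : M →ₗ[R] M'} (σ : ker π ≃ₗ[R] ker π') (κ : N ≃ₗ[R] N')
    (hσ : ∀ a : ker π, φ a = σ a) (hφ : ∀ x, π' (φ x) = κ (π x)) :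
    Function.Bijective φ := by
  refine ⟨(injective_iff_map_eq_zero φ).mpr fun x hx => ?_, fun y => ?_⟩
  · have hxI : x ∈ ker π := (mem_ker_iff_map_mem_ker κ.injective hφ x).mpr (by simp [hx])
    have : σ ⟨x, hxI⟩ = 0 := Subtype.ext (by rw [← hσ]; exact hx)
    simpa using congrArg Subtype.val (σ.map_eq_zero_iff.mp this)
  · obtain ⟨m, hm⟩ := hπ (κ.symm (π' y))
    have hyI : y - φ m ∈ ker π' := by simp [hφ, hm]
    refine ⟨m + σ.symm ⟨y - φ m, hyI⟩, ?_⟩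
    rw [map_add, hσ, LinearEquiv.apply_symm_apply, add_sub_cancel]

end Extension

section Lift

variable {R M N M' : Type*} [Ring R] [AddCommGroup M] [Module R M] [AddCommGroup N]
  [Module R N] [AddCommGroup M'] [Module R M'] {π : M →ₗ[R] N} {l : N → M}
  {hl : ∀ x, π (l x) = x}

@[simp]
lemma coe_wellsTadd (x y : N) : (wellsTadd π l hl x y : M) = l x + l y - l (x + y) :=
  rfl

@[simp]
lemma coe_wellsTsmul (r : R) (x : N) : (wellsTsmul π l hl r x : M) = r • l x - l (r • x) :=
  rfl

lemma sub_lift_mem_ker (hl : ∀ x, π (l x) = x) (m : M) : m - l (π m) ∈ ker π := by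
  simp [hl]

def linearMapOfCocycle (σ : ker π →ₗ[R] M') (g : N → M')
    (hadd : ∀ x y, g x + g y - g (x + y) = σ (wellsTadd π l hl x y))
    (hsmul : ∀ (r : R) x, r • g x - g (r • x) = σ (wellsTsmul π l hl r x)) : M →ₗ[R] M' where
  toFun m := g (π m) + σ ⟨m - l (π m), sub_lift_mem_ker hl m⟩
  map_add' m₁ m₂ := by
    have hsplit : (⟨m₁ + m₂ - l (π (m₁ + m₂)), sub_lift_mem_ker hl _⟩ : ker π) =
        ⟨m₁ - l (π m₁), sub_lift_mem_ker hl m₁⟩ + ⟨m₂ - l (π m₂), sub_lift_mem_ker hl m₂⟩ +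
          wellsTadd π l hl (π m₁) (π m₂) :=
      Subtype.ext (by simp only [map_add, Submodule.coe_add, coe_wellsTadd]; abel)
    rw [hsplit, map_add, map_add, ← hadd, map_add]
    abel
  map_smul' r m := by
    have hsplit : (⟨r • m - l (π (r • m)), sub_lift_mem_ker hl _⟩ : ker π) =
        r • ⟨m - l (π m), sub_lift_mem_ker hl m⟩ + wellsTsmul π l hl r (π m) :=
      Subtype.ext (by simp only [map_smul, Submodule.coe_add, Submodule.coe_smul,
        coe_wellsTsmul, smul_sub]; abel)
    rw [hsplit, π.map_smul, map_add, σ.map_smul, ← hsmul, RingHom.id_apply, smul_add]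
    abel

variable {σ : ker π →ₗ[R] M'} {g : N → M'}
  {hadd : ∀ x y, g x + g y - g (x + y) = σ (wellsTadd π l hl x y)}
  {hsmul : ∀ (r : R) x, r • g x - g (r • x) = σ (wellsTsmul π l hl r x)}

lemma linearMapOfCocycle_apply (m : M) :
    linearMapOfCocycle σ g hadd hsmul m = g (π m) + σ ⟨m - l (π m), sub_lift_mem_ker hl m⟩ :=
  rfl

lemma linearMapOfCocycle_apply_coe_ker (a : ker π) :
    linearMapOfCocycle σ g hadd hsmul a = σ a := by
  have hl0 : l 0 ∈ ker π := by simp [hl]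
  have hg0 : g 0 = σ ⟨l 0, hl0⟩ := by
    simpa [show wellsTadd π l hl 0 0 = ⟨l 0, hl0⟩ from Subtype.ext (by simp)] using hadd 0 0
  have ha : (⟨a - l (π a), sub_lift_mem_ker hl a⟩ : ker π) = a - ⟨l 0, hl0⟩ :=
    Subtype.ext (by simp)
  rw [linearMapOfCocycle_apply, ha, map_sub, a.2, hg0, add_sub_cancel]

end Lift

section Automorphism

variable {R M N : Type*} [Ring R] [AddCommGroup M] [Module R M] [AddCommGroup N] [Module R N]
  {π : M →ₗ[R] N} {l : N → M} {hl : ∀ x, π (l x) = x}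
  {σ : ker π →ₗ[R] ker π} {κ : N ≃ₗ[R] N}

def liftDefect (hl : ∀ x, π (l x) = x) (φ : M →ₗ[R] M) (κ : N ≃ₗ[R] N)
    (hφ : ∀ x, π (φ x) = κ (π x)) (n : N) : ker π :=
  ⟨l n - φ (l (κ.symm n)), by simp [hφ, hl]⟩

variable {h : N → ker π}

lemma coe_map_wellsTadd_eq_of_sub_eq
    (H : ∀ x y, wellsTadd π l hl (κ x) (κ y) - σ (wellsTadd π l hl x y) =
      h (κ x) + h (κ y) - h (κ x + κ y)) (x y : N) :
    (l (κ x) - h (κ x)) + (l (κ y) - h (κ y)) - (l (κ (x + y)) - h (κ (x + y))) =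
      σ (wellsTadd π l hl x y) := by
  have := congrArg Subtype.val (H x y)
  simp only [Submodule.coe_sub, Submodule.coe_add, coe_wellsTadd] at this
  rw [map_add]
  linear_combination (norm := abel) this

lemma coe_map_wellsTsmul_eq_of_sub_eq
    (H : ∀ (r : R) x, wellsTsmul π l hl r (κ x) - σ (wellsTsmul π l hl r x) =
      r • h (κ x) - h (r • κ x)) (r : R) (x : N) :
    r • (l (κ x) - h (κ x)) - (l (κ (r • x)) - h (κ (r • x))) =
      σ (wellsTsmul π l hl r x) := by
  have := congrArg Subtype.val (H r x)
  simp only [Submodule.coe_sub, Submodule.coe_smul, coe_wellsTsmul] at this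
  rw [map_smul, smul_sub]
  linear_combination (norm := abel) this

variable {φ : M →ₗ[R] M} (hσ : ∀ a : ker π, φ a = σ a) (hφ : ∀ x, π (φ x) = κ (π x))
include hσ

lemma wellsTadd_sub_eq_liftDefect (x y : N) :
    wellsTadd π l hl (κ x) (κ y) - σ (wellsTadd π l hl x y) =
      liftDefect hl φ κ hφ (κ x) + liftDefect hl φ κ hφ (κ y) -
        liftDefect hl φ κ hφ (κ x + κ y) := by
  have hκ : κ.symm (κ x + κ y) = x + y := by simp
  apply Subtype.ext
  simp only [Submodule.coe_sub, Submodule.coe_add, ← hσ, coe_wellsTadd, liftDefect, hκ,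
    LinearEquiv.symm_apply_apply, map_add, map_sub]
  abel

lemma wellsTsmul_sub_eq_liftDefect (r : R) (x : N) :
    wellsTsmul π l hl r (κ x) - σ (wellsTsmul π l hl r x) =
      r • liftDefect hl φ κ hφ (κ x) - liftDefect hl φ κ hφ (r • κ x) := by
  have hκ : κ.symm (r • κ x) = r • x := by simp
  apply Subtype.ext
  simp only [Submodule.coe_sub, Submodule.coe_smul, ← hσ, coe_wellsTsmul, liftDefect, hκ,
    LinearEquiv.symm_apply_apply, map_smul, map_sub, smul_sub]
  abel

end Automorphism

/-- Exactness of the Wells sequence at `Aut I × Aut N` for extensions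
of `R`-modules: given `σ ∈ Aut_R I` and `κ ∈ Aut_R N`, there exists `φ ∈ Aut_I M`
with `φ|_I = σ` and `π ∘ φ = κ ∘ π` iff there is `h : N → I` such that for all
`x, y ∈ N`, `r ∈ R`:
`T_+(κx,κy) - σ(T_+(x,y)) = h(κx) + h(κy) - h(κx+κy)` and
`T_r(κx) - σ(T_r(x)) = r • h(κx) - h(r • κx)`. -/
theorem wells_module_exactness {R M N : Type*} [Ring R]
    [AddCommGroup M] [Module R M] [AddCommGroup N] [Module R N]
    (π : M →ₗ[R] N) (hπ : Function.Surjective π)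
    (l : N → M) (hl : ∀ x, π (l x) = x)
    (σ : LinearMap.ker π ≃ₗ[R] LinearMap.ker π) (κ : N ≃ₗ[R] N) :
    (∃ φ : M ≃ₗ[R] M, (∀ x, x ∈ LinearMap.ker π ↔ φ x ∈ LinearMap.ker π) ∧
        (∀ a : LinearMap.ker π, φ (a : M) = (σ a : M)) ∧
        (∀ x : M, π (φ x) = κ (π x))) ↔
      ∃ h : N → LinearMap.ker π,
        (∀ x y : N, wellsTadd π l hl (κ x) (κ y) - σ (wellsTadd π l hl x y) =
          h (κ x) + h (κ y) - h (κ x + κ y)) ∧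
        (∀ (r : R) (x : N), wellsTsmul π l hl r (κ x) - σ (wellsTsmul π l hl r x) =
          r • h (κ x) - h (r • κ x)) := by
  constructor
  · rintro ⟨φ, -, hσ, hφ⟩
    exact ⟨liftDefect hl φ.toLinearMap κ hφ,
      wellsTadd_sub_eq_liftDefect (σ := σ.toLinearMap) hσ hφ,
      wellsTsmul_sub_eq_liftDefect (σ := σ.toLinearMap) hσ hφ⟩
  · rintro ⟨h, hadd, hsmul⟩
    let g : N → M := fun n => l (κ n) - h (κ n)
    let σ' : ker π →ₗ[R] M := (ker π).subtype ∘ₗ σ.toLinearMap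
    have hgadd : ∀ x y, g x + g y - g (x + y) = σ' (wellsTadd π l hl x y) :=
      coe_map_wellsTadd_eq_of_sub_eq (σ := σ.toLinearMap) hadd
    have hgsmul : ∀ (r : R) x, r • g x - g (r • x) = σ' (wellsTsmul π l hl r x) :=
      coe_map_wellsTsmul_eq_of_sub_eq (σ := σ.toLinearMap) hsmul
    let f := linearMapOfCocycle σ' g hgadd hgsmul
    have hfσ : ∀ a : ker π, f a = σ a := linearMapOfCocycle_apply_coe_ker
    have hfκ : ∀ m, π (f m) = κ (π m) := fun m => by
      simp [f, linearMapOfCocycle_apply, g, σ', hl]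
    exact ⟨.ofBijective f (bijective_of_restrict_ker_of_comp hπ σ κ hfσ hfκ),
      mem_ker_iff_map_mem_ker κ.injective hfκ, hfσ, hfκ⟩
end
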